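/- Two backward renewal (age) processes that are piecewise linear with slope 1 and reset to 0 at their respective renewal epochs can first coincide only at a time when both equal zero: if B^{(1)}_t and B^{(2)}_t are defined by B^{(j)}_t = t − θ^{(j)}_{R^{(j)}_t} (age since last renewal, with B^{(j)}_t = b_j + t before the first renewal), and B^{(1)}_s ≠ B^{(2)}_s for all s < t while B^{(1)}_t = B^{(2)}_t, then B^{(1)}_t = B^{(2)}_t = 0. -/
import Mathlib


open Set Filter

/-- Two backward renewal (age) processes, piecewise linear with slope 1 and
resetting to 0 at their respective (disjoint) renewal epochs, can first
coincide only at a time when both equal zero. -/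
theorem stmt17 (θ : Fin 2 → ℕ → ℝ)
    (hpos : ∀ j n, 0 < θ j n)
    (hmono : ∀ j, StrictMono (θ j))
    (htop : ∀ j, Tendsto (θ j) atTop atTop)
    (hdisj : ∀ n m, θ 0 n ≠ θ 1 m)
    (b : Fin 2 → ℝ) (hb : ∀ j, 0 ≤ b j) (hbne : b 0 ≠ b 1)
    (B : Fin 2 → ℝ → ℝ)
    (hB : ∀ j t, B j t =
      if t < θ j 0 then b j + t
      else t - sSup {x | (∃ n, θ j n = x) ∧ x ≤ t}) :
    ∀ t : ℝ, 0 ≤ t →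
      (∀ s, 0 ≤ s → s < t → B 0 s ≠ B 1 s) →
      B 0 t = B 1 t →
      B 0 t = 0 ∧ B 1 t = 0 := by
  classical
  intro t ht hfirst heq
  -- the sup of renewal epochs ≤ s is attained at some largest index N
  have hsup : ∀ (j : Fin 2) (s : ℝ), θ j 0 ≤ s →
      ∃ N, sSup {x | (∃ n, θ j n = x) ∧ x ≤ s} = θ j N ∧ θ j N ≤ s ∧
        ∀ n, θ j n ≤ s → n ≤ N := by
    intro j s hs
    obtain ⟨M, hM⟩ := Filter.eventually_atTop.mp ((htop j).eventually_gt_atTop s)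
    have hbd : ∀ n, θ j n ≤ s → n ≤ M := by
      intro n hn
      by_contra h
      exact absurd hn (not_le.mpr (hM n (le_of_lt (not_le.mp h))))
    set P : ℕ → Prop := fun n => θ j n ≤ s with hP
    set N := Nat.findGreatest P M with hN
    have hPN : P N := Nat.findGreatest_spec (Nat.zero_le M) hs
    have hle : ∀ n, θ j n ≤ s → n ≤ N := fun n hn =>
      Nat.le_findGreatest (hbd n hn) hn
    refine ⟨N, ?_, hPN, hle⟩
    apply le_antisymm
    · refine csSup_le ⟨θ j 0, ⟨0, rfl⟩, hs⟩ ?_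
      rintro x ⟨⟨n, rfl⟩, hx⟩
      exact (hmono j).monotone (hle n hx)
    · exact le_csSup ⟨s, by rintro x ⟨⟨n, rfl⟩, hx⟩; exact hx⟩ ⟨⟨N, rfl⟩, hPN⟩
  -- nonnegativity of B j t
  have hnn : ∀ j : Fin 2, 0 ≤ B j t := by
    intro j
    rw [hB]
    split
    · linarith [hb j]
    · next h =>
      obtain ⟨N, hNs, hNle, _⟩ := hsup j t (not_lt.mp h)
      rw [hNs]; linarith
  -- linearity just before t: if t - s ≤ B j t then B j s = B j t - (t - s)
  have key : ∀ (j : Fin 2) (s : ℝ), 0 ≤ s → s ≤ t → t - s ≤ B j t →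
      B j s = B j t - (t - s) := by
    intro j s hs hst hts
    rw [hB j t] at hts ⊢
    rw [hB j s]
    by_cases h : t < θ j 0
    · rw [if_pos h, if_pos (lt_of_le_of_lt hst h)]
      ring
    · rw [if_neg h] at hts ⊢
      have h0t : θ j 0 ≤ t := not_lt.mp h
      obtain ⟨N, hNs, hNle, hmax⟩ := hsup j t h0t
      rw [hNs] at hts ⊢
      have hNs' : θ j N ≤ s := by linarith
      have h0s : θ j 0 ≤ s := le_trans ((hmono j).monotone (Nat.zero_le N)) hNs'
      rw [if_neg (not_lt.mpr h0s)]
      obtain ⟨N', hN's, hN'le, hmax'⟩ := hsup j s h0s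
      have hNN' : N = N' := le_antisymm (hmax' N hNs') (hmax N' (le_trans hN'le hst))
      rw [hN's, ← hNN']
      ring
  -- it suffices to show B 0 t = 0
  suffices h0 : B 0 t = 0 by exact ⟨h0, heq ▸ h0⟩
  by_contra hc
  have hcpos : 0 < B 0 t := lt_of_le_of_ne (hnn 0) (Ne.symm hc)
  -- t > 0, since at time 0 the processes differ (b 0 ≠ b 1)
  rcases ht.eq_or_lt with h0 | htpos
  · exfalso
    have h1 : B 0 t = b 0 := by
      rw [hB, if_pos (by rw [← h0]; exact hpos 0 0)]; rw [← h0]; ring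
    have h2 : B 1 t = b 1 := by
      rw [hB, if_pos (by rw [← h0]; exact hpos 1 0)]; rw [← h0]; ring
    exact hbne (h1 ▸ h2 ▸ heq)
  -- take s slightly before t; both processes are linear on [s, t], so equal at s
  set δ := min (B 0 t) t with hδ
  have hδpos : 0 < δ := lt_min hcpos htpos
  have hδt : δ ≤ t := min_le_right _ _
  have hδB : δ ≤ B 0 t := min_le_left _ _
  set s := t - δ with hsdef
  have hs0 : 0 ≤ s := by simp [hsdef]; linarith
  have hst : s < t := by simp [hsdef]; linarith
  have hts : t - s = δ := by simp [hsdef]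
  have e0 : B 0 s = B 0 t - δ := by
    have := key 0 s hs0 hst.le (by rw [hts]; exact hδB)
    rwa [hts] at this
  have e1 : B 1 s = B 1 t - δ := by
    have := key 1 s hs0 hst.le (by rw [hts, ← heq]; exact hδB)
    rwa [hts] at this
  exact hfirst s hs0 hst (by rw [e0, e1, heq])
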